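/- arXiv:0912.4872 — 2 statements merged into one kernel-verified Lean document; each statement's English description precedes it below -/
import Mathlib

section
/- The identity I(X^n → Y^n) = Σ_{i=1}^n I(X_i; Y_i^n | X^{i-1}, Y^{i-1}) holds, where Y_i^n = (Y_i, Y_{i+1}, …, Y_n); that is, the two expansions of directed information agree. -/
open scoped Classical
open Real

noncomputable section

variable {α β : Type} [Fintype α] [DecidableEq α] [Fintype β] [DecidableEq β]

/-- Probability of the event `E` under the joint pmf `p` of `(X^n, Y^n)`. -/
def pr {n : ℕ} (p : (Fin n → α) → (Fin n → β) → ℝ)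
    (E : (Fin n → α) → (Fin n → β) → Prop) : ℝ :=
  ∑ x, ∑ y, if E x y then p x y else 0

/-- `p` is a probability mass function on pairs of sequences. -/
def IsPmf {n : ℕ} (p : (Fin n → α) → (Fin n → β) → ℝ) : Prop :=
  (∀ x y, 0 ≤ p x y) ∧ ∑ x, ∑ y, p x y = 1

/-- The conditional pmf `p(x_i | x^{i-1}, y^{i-d})` evaluated along `(x, y)`. -/
def condX {n : ℕ} (p : (Fin n → α) → (Fin n → β) → ℝ) (d : ℕ) (i : Fin n)
    (x : Fin n → α) (y : Fin n → β) : ℝ :=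
  pr p (fun x' y' => (∀ j, j < i → x' j = x j) ∧ x' i = x i ∧
      ∀ j : Fin n, (j : ℕ) + d ≤ (i : ℕ) → y' j = y j) /
  pr p (fun x' y' => (∀ j, j < i → x' j = x j) ∧
      ∀ j : Fin n, (j : ℕ) + d ≤ (i : ℕ) → y' j = y j)

/-- The conditional pmf `p(y_i | y^{i-1}, x^{i-d})` evaluated along `(x, y)`. -/
def condY {n : ℕ} (p : (Fin n → α) → (Fin n → β) → ℝ) (d : ℕ) (i : Fin n)
    (x : Fin n → α) (y : Fin n → β) : ℝ :=
  pr p (fun x' y' => (∀ j, j < i → y' j = y j) ∧ y' i = y i ∧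
      ∀ j : Fin n, (j : ℕ) + d ≤ (i : ℕ) → x' j = x j) /
  pr p (fun x' y' => (∀ j, j < i → y' j = y j) ∧
      ∀ j : Fin n, (j : ℕ) + d ≤ (i : ℕ) → x' j = x j)

/-- Causally conditioned pmf `p(x^n || y^{n-d}) = ∏ᵢ p(xᵢ | x^{i-1}, y^{i-d})`. -/
def ccX {n : ℕ} (p : (Fin n → α) → (Fin n → β) → ℝ) (d : ℕ)
    (x : Fin n → α) (y : Fin n → β) : ℝ :=
  ∏ i, condX p d i x y

/-- Causally conditioned pmf `p(y^n || x^{n-d}) = ∏ᵢ p(yᵢ | y^{i-1}, x^{i-d})`. -/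
def ccY {n : ℕ} (p : (Fin n → α) → (Fin n → β) → ℝ) (d : ℕ)
    (x : Fin n → α) (y : Fin n → β) : ℝ :=
  ∏ i, condY p d i x y

/-- Marginal pmf of `X^n`. -/
def pX {n : ℕ} (p : (Fin n → α) → (Fin n → β) → ℝ) (x : Fin n → α) : ℝ := ∑ y, p x y

/-- Marginal pmf of `Y^n`. -/
def pY {n : ℕ} (p : (Fin n → α) → (Fin n → β) → ℝ) (y : Fin n → β) : ℝ := ∑ x, p x y

/-- `H(X^n)` in bits. -/
def HX {n : ℕ} (p : (Fin n → α) → (Fin n → β) → ℝ) : ℝ :=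
  -(∑ x, ∑ y, p x y * Real.logb 2 (pX p x))

/-- `H(Y^n)` in bits. -/
def HY {n : ℕ} (p : (Fin n → α) → (Fin n → β) → ℝ) : ℝ :=
  -(∑ x, ∑ y, p x y * Real.logb 2 (pY p y))

/-- Joint entropy `H(X^n, Y^n)` in bits. -/
def Hjoint {n : ℕ} (p : (Fin n → α) → (Fin n → β) → ℝ) : ℝ :=
  -(∑ x, ∑ y, p x y * Real.logb 2 (p x y))

/-- Conditional entropy `H(X_i | X^{i-1}, Y^{i-d})` in bits. -/
def HcondX {n : ℕ} (p : (Fin n → α) → (Fin n → β) → ℝ) (d : ℕ) (i : Fin n) : ℝ :=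
  -(∑ x, ∑ y, p x y * Real.logb 2 (condX p d i x y))

/-- Conditional entropy `H(Y_i | Y^{i-1}, X^{i-d})` in bits. -/
def HcondY {n : ℕ} (p : (Fin n → α) → (Fin n → β) → ℝ) (d : ℕ) (i : Fin n) : ℝ :=
  -(∑ x, ∑ y, p x y * Real.logb 2 (condY p d i x y))

/-- Causally conditional entropy `H(X^n || Y^{n-d}) = Σᵢ H(Xᵢ | X^{i-1}, Y^{i-d})`. -/
def HccX {n : ℕ} (p : (Fin n → α) → (Fin n → β) → ℝ) (d : ℕ) : ℝ := ∑ i, HcondX p d i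

/-- Causally conditional entropy `H(Y^n || X^{n-d})`. -/
def HccY {n : ℕ} (p : (Fin n → α) → (Fin n → β) → ℝ) (d : ℕ) : ℝ := ∑ i, HcondY p d i

/-- Conditional mutual information `I(Y^i; X_i | X^{i-1})`
(as the expectation of `log (p(xᵢ|x^{i-1},y^i) / p(xᵢ|x^{i-1}))`;
note `condX p n` is `p(xᵢ|x^{i-1})`, conditioning on no `y`'s at all). -/
def cmiYX {n : ℕ} (p : (Fin n → α) → (Fin n → β) → ℝ) (i : Fin n) : ℝ :=
  ∑ x, ∑ y, p x y * Real.logb 2 (condX p 0 i x y / condX p n i x y)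

/-- Conditional mutual information `I(X^i; Y_i | Y^{i-1})`. -/
def cmiXY {n : ℕ} (p : (Fin n → α) → (Fin n → β) → ℝ) (i : Fin n) : ℝ :=
  ∑ x, ∑ y, p x y * Real.logb 2 (condY p 0 i x y / condY p n i x y)

/-- Directed information `I(Y^n → X^n) = Σᵢ I(Y^i; X_i | X^{i-1})`. -/
def dirYX {n : ℕ} (p : (Fin n → α) → (Fin n → β) → ℝ) : ℝ := ∑ i, cmiYX p i

/-- Directed information `I(X^n → Y^n) = Σᵢ I(X^i; Y_i | Y^{i-1})`. -/
def dirXY {n : ℕ} (p : (Fin n → α) → (Fin n → β) → ℝ) : ℝ := ∑ i, cmiXY p i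

/-- Directed information `I(Y^{n-1} → X^n) = Σᵢ I(Y^{i-1}; X_i | X^{i-1})`
(the term for `i = 1` vanishes, so we may sum over all `i`). -/
def dirY1X {n : ℕ} (p : (Fin n → α) → (Fin n → β) → ℝ) : ℝ :=
  ∑ i, ∑ x, ∑ y, p x y * Real.logb 2 (condX p 1 i x y / condX p n i x y)

/-- Mutual information `I(X^n; Y^n)` in bits. -/
def miXY {n : ℕ} (p : (Fin n → α) → (Fin n → β) → ℝ) : ℝ :=
  ∑ x, ∑ y, p x y * Real.logb 2 (p x y / (pX p x * pY p y))

/-- The conditional pmf `p(x_i | x^{i-1}, y^n)` evaluated along `(x, y)`. -/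
def condXfull {n : ℕ} (p : (Fin n → α) → (Fin n → β) → ℝ) (i : Fin n)
    (x : Fin n → α) (y : Fin n → β) : ℝ :=
  pr p (fun x' y' => (∀ j, j < i → x' j = x j) ∧ x' i = x i ∧ ∀ j, y' j = y j) /
  pr p (fun x' y' => (∀ j, j < i → x' j = x j) ∧ ∀ j, y' j = y j)

/-!
Fix an outcome `(x, y)` of positive probability and write `S a b = P(X^a = x^a, Y^b = y^b)`.
Every conditional pmf in the statement is a ratio of two values of `S`, so the `i`-th summands
of the two sides are `log (S(i+1,i+1) / S(i+1,i)) - log (S(0,i+1) / S(0,i))` and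
`log (S(i+1,n) / S(i,n)) - log (S(i+1,i) / S(i,i))`. Their difference telescopes along the
diagonal, the first row and the last column of `S`, and sums to zero.
-/

def prefixPr {n : ℕ} (p : (Fin n → α) → (Fin n → β) → ℝ) (x : Fin n → α) (y : Fin n → β)
    (a b : ℕ) : ℝ :=
  pr p (fun x' y' => (∀ j : Fin n, (j : ℕ) < a → x' j = x j) ∧
    ∀ j : Fin n, (j : ℕ) < b → y' j = y j)

section Prefix

variable {γ : Type*} {n : ℕ} {f g : Fin n → γ}

lemma forall_lt_and_eq_iff_forall_lt_succ {i : Fin n} :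
    ((∀ j, j < i → f j = g j) ∧ f i = g i) ↔ ∀ j : Fin n, (j : ℕ) < i + 1 → f j = g j := by
  refine ⟨fun ⟨hlt, heq⟩ j hj => ?_, fun h => ⟨fun j hj => h j (by omega), h i (by omega)⟩⟩
  rcases Nat.lt_succ_iff_lt_or_eq.mp hj with hj | hj
  · exact hlt j hj
  · rwa [Fin.ext hj]

lemma forall_add_le_iff_forall_lt_sub {i d : ℕ} :
    (∀ j : Fin n, (j : ℕ) + d ≤ i → f j = g j) ↔ ∀ j : Fin n, (j : ℕ) < i + 1 - d → f j = g j :=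
  forall_congr' fun j => imp_congr_left (by omega)

lemma forall_iff_forall_lt : (∀ j, f j = g j) ↔ ∀ j : Fin n, (j : ℕ) < n → f j = g j :=
  forall_congr' fun j => by simp [j.is_lt]

end Prefix

lemma pr_congr {n : ℕ} (p : (Fin n → α) → (Fin n → β) → ℝ)
    {E E' : (Fin n → α) → (Fin n → β) → Prop} (h : ∀ x y, E x y ↔ E' x y) :
    pr p E = pr p E' := by
  simp only [pr, h]

lemma pr_pos {n : ℕ} {p : (Fin n → α) → (Fin n → β) → ℝ} (hp : ∀ x y, 0 ≤ p x y)
    {E : (Fin n → α) → (Fin n → β) → Prop} {x : Fin n → α} {y : Fin n → β} (hE : E x y)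
    (hxy : 0 < p x y) : 0 < pr p E := by
  have hnonneg : ∀ x' y', 0 ≤ if E x' y' then p x' y' else 0 := fun x' y' => by
    split_ifs
    exacts [hp x' y', le_rfl]
  refine Finset.sum_pos' (fun x' _ => Finset.sum_nonneg fun y' _ => hnonneg x' y')
    ⟨x, Finset.mem_univ x, Finset.sum_pos' (fun y' _ => hnonneg x y') ⟨y, Finset.mem_univ y, ?_⟩⟩
  rwa [if_pos hE]

lemma prefixPr_pos {n : ℕ} {p : (Fin n → α) → (Fin n → β) → ℝ} (hp : ∀ x y, 0 ≤ p x y)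
    {x : Fin n → α} {y : Fin n → β} (hxy : 0 < p x y) (a b : ℕ) : 0 < prefixPr p x y a b :=
  pr_pos hp ⟨fun _ _ => rfl, fun _ _ => rfl⟩ hxy

lemma condX_eq_prefixPr {n : ℕ} (p : (Fin n → α) → (Fin n → β) → ℝ) (d : ℕ) (i : Fin n)
    (x : Fin n → α) (y : Fin n → β) :
    condX p d i x y =
      prefixPr p x y (i + 1) (i + 1 - d) / prefixPr p x y i (i + 1 - d) := by
  unfold condX prefixPr
  congr 1 <;> refine pr_congr p fun x' y' => ?_
  · rw [← and_assoc, forall_lt_and_eq_iff_forall_lt_succ, forall_add_le_iff_forall_lt_sub]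
  · rw [forall_add_le_iff_forall_lt_sub]; rfl

lemma condY_eq_prefixPr {n : ℕ} (p : (Fin n → α) → (Fin n → β) → ℝ) (d : ℕ) (i : Fin n)
    (x : Fin n → α) (y : Fin n → β) :
    condY p d i x y =
      prefixPr p x y (i + 1 - d) (i + 1) / prefixPr p x y (i + 1 - d) i := by
  unfold condY prefixPr
  congr 1 <;> refine pr_congr p fun x' y' => ?_
  · rw [← and_assoc, forall_lt_and_eq_iff_forall_lt_succ, forall_add_le_iff_forall_lt_sub,
      and_comm]
  · rw [forall_add_le_iff_forall_lt_sub, and_comm]; rfl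

lemma condXfull_eq_prefixPr {n : ℕ} (p : (Fin n → α) → (Fin n → β) → ℝ) (i : Fin n)
    (x : Fin n → α) (y : Fin n → β) :
    condXfull p i x y = prefixPr p x y (i + 1) n / prefixPr p x y i n := by
  unfold condXfull prefixPr
  congr 1 <;> refine pr_congr p fun x' y' => ?_
  · rw [← and_assoc, forall_lt_and_eq_iff_forall_lt_succ, forall_iff_forall_lt]
  · rw [forall_iff_forall_lt]; rfl

lemma sum_range_diagonal_telescope (L : ℕ → ℕ → ℝ) (n : ℕ) :
    ∑ k ∈ Finset.range n, ((L (k + 1) (k + 1) - L (k + 1) k) - (L 0 (k + 1) - L 0 k)) =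
      ∑ k ∈ Finset.range n, ((L (k + 1) n - L k n) - (L (k + 1) k - L k k)) := by
  have hdiag := Finset.sum_range_sub (fun k => L k k) n
  have hrow := Finset.sum_range_sub (fun k => L 0 k) n
  have hcol := Finset.sum_range_sub (fun k => L k n) n
  simp only [Finset.sum_sub_distrib] at hdiag hrow hcol ⊢
  linarith

lemma sum_logb_condY_ratio_eq_sum_logb_condXfull_ratio {n : ℕ}
    {p : (Fin n → α) → (Fin n → β) → ℝ} (hp : ∀ x y, 0 ≤ p x y)
    {x : Fin n → α} {y : Fin n → β} (hxy : 0 < p x y) :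
    ∑ i, Real.logb 2 (condY p 0 i x y / condY p n i x y) =
      ∑ i, Real.logb 2 (condXfull p i x y / condX p 1 i x y) := by
  set L : ℕ → ℕ → ℝ := fun a b => Real.logb 2 (prefixPr p x y a b)
  have logb_ratio : ∀ a b a' b' c d c' d', Real.logb 2
      ((prefixPr p x y a b / prefixPr p x y a' b') / (prefixPr p x y c d / prefixPr p x y c' d')) =
        (L a b - L a' b') - (L c d - L c' d') := by
    intro a b a' b' c d c' d'
    have hS := prefixPr_pos hp hxy
    rw [Real.logb_div (div_pos (hS _ _) (hS _ _)).ne' (div_pos (hS _ _) (hS _ _)).ne',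
      Real.logb_div (hS _ _).ne' (hS _ _).ne', Real.logb_div (hS _ _).ne' (hS _ _).ne']
  have hsub : ∀ i : Fin n, (i : ℕ) + 1 - n = 0 := fun i => by omega
  simp only [condY_eq_prefixPr, condX_eq_prefixPr, condXfull_eq_prefixPr, Nat.sub_zero, hsub,
    Nat.add_sub_cancel, logb_ratio]
  exact (Fin.sum_univ_eq_sum_range _ n).trans
    ((sum_range_diagonal_telescope L n).trans (Fin.sum_univ_eq_sum_range _ n).symm)

/-- the identity
`I(X^n → Y^n) = Σᵢ I(X_i; Y_i^n | X^{i-1}, Y^{i-1})`, where the `i`-th term on the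
right is the conditional mutual information
`E[log (p(x_i | x^{i-1}, y^n) / p(x_i | x^{i-1}, y^{i-1}))]`. -/
theorem dirInfo_alternative_expansion {n : ℕ}
    (p : (Fin n → α) → (Fin n → β) → ℝ) (hp : IsPmf p) :
    dirXY p =
      ∑ i, ∑ x, ∑ y,
        p x y * Real.logb 2 (condXfull p i x y / condX p 1 i x y) := by
  unfold dirXY cmiXY
  rw [← Finset.sum_comm_cycle]
  conv_rhs => rw [← Finset.sum_comm_cycle]
  refine Finset.sum_congr rfl fun x _ => Finset.sum_congr rfl fun y _ => ?_
  simp only [← Finset.mul_sum]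
  rcases (hp.1 x y).eq_or_lt with h0 | hpos
  · simp [← h0]
  · rw [sum_logb_condY_ratio_eq_sum_logb_condXfull_ratio hp.1 hpos]
end
end

section
/- The increase in optimal growth due to causal side information in a horse race equals directed information: W*(X^n||Y^n) − W*(X^n) = I(Y^n → X^n), where W*(X^n||Y^n) is the maximal expected log-wealth with causal side information and W*(X^n) without side information. -/
open scoped Classical
open Real

noncomputable section

variable {α β : Type} [Fintype α] [DecidableEq α] [Fintype β] [DecidableEq β]

/-- A causal gambling strategy: `b i x y` is the fraction of wealth bet on horse `x i`
given the history `(x^{i-1}, y^i)`; it is nonnegative, depends only on `(x^i, y^i)`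
(the bet-upon horse `x i` together with the causal history), and is normalized. -/
def IsCausalBet {n : ℕ} (b : Fin n → (Fin n → α) → (Fin n → β) → ℝ) : Prop :=
  (∀ i x y, 0 ≤ b i x y) ∧
  (∀ i x x' y y', (∀ j, j ≤ i → x j = x' j) → (∀ j, j ≤ i → y j = y' j) →
    b i x y = b i x' y') ∧
  (∀ i x y, ∑ a : α, b i (Function.update x i a) y = 1)

/-- `E[log b(X^n || Y^n)]` where `b(x^n||y^n) = ∏ᵢ b(xᵢ|x^{i-1},y^i)`. -/
def Elogb {n : ℕ} (p : (Fin n → α) → (Fin n → β) → ℝ)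
    (b : Fin n → (Fin n → α) → (Fin n → β) → ℝ) : ℝ :=
  ∑ x, ∑ y, p x y * Real.logb 2 (∏ i, b i x y)

/-- The growth `W(X^n||Y^n) = E[log S(X^n||Y^n)]`, where
`S(x^n||y^n) = ∏ᵢ b(xᵢ|x^{i-1},y^i) o(xᵢ|x^{i-1})`. -/
def growthW {n : ℕ} (p : (Fin n → α) → (Fin n → β) → ℝ)
    (o : Fin n → (Fin n → α) → ℝ)
    (b : Fin n → (Fin n → α) → (Fin n → β) → ℝ) : ℝ :=
  ∑ x, ∑ y, p x y * Real.logb 2 (∏ i, b i x y * o i x)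

/-- `E[log o(X^n)]` with `o(x^n) = ∏ᵢ o(xᵢ|x^{i-1})`. -/
def Elogo {n : ℕ} (p : (Fin n → α) → (Fin n → β) → ℝ)
    (o : Fin n → (Fin n → α) → ℝ) : ℝ :=
  ∑ x, ∑ y, p x y * Real.logb 2 (∏ i, o i x)

/-!
With side information the growth splits as `E log o(Xⁿ) + Σᵢ E log b(Xᵢ | X^{i-1}, Y^i)`, and
by Gibbs' inequality, applied cell by cell of the conditioning `(x^{i-1}, y^i)`, each summand is
maximal for the true conditional `b = p(xᵢ | x^{i-1}, y^i)`; hence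
`W*(Xⁿ‖Yⁿ) = E log o(Xⁿ) − H(Xⁿ‖Yⁿ)`. Without side information the same argument, conditioning on
`x^{i-1}` alone, gives `W*(Xⁿ) = E log o(Xⁿ) − Σᵢ H(Xᵢ | X^{i-1})`, and the chain rule turns the
last sum into `H(Xⁿ)`.
-/

open Finset

variable {n : ℕ}

section HorseRace

omit [DecidableEq α] [DecidableEq β]

section Events

omit [Fintype α] [Fintype β]

-- `AgreeUpTo i d x y` is the event `{X^i = x^i, Y^{i-d} = y^{i-d}}` (indices start at 0, so it
-- fixes the current horse `Xᵢ`); `AgreeBefore` leaves `Xᵢ` free.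
def AgreeUpTo (i : Fin n) (d : ℕ) (x : Fin n → α) (y : Fin n → β) :
    (Fin n → α) → (Fin n → β) → Prop :=
  fun x' y' => (∀ j, j ≤ i → x' j = x j) ∧ ∀ j : Fin n, (j : ℕ) + d ≤ i → y' j = y j

def AgreeBefore (i : Fin n) (d : ℕ) (x : Fin n → α) (y : Fin n → β) :
    (Fin n → α) → (Fin n → β) → Prop :=
  fun x' y' => (∀ j, j < i → x' j = x j) ∧ ∀ j : Fin n, (j : ℕ) + d ≤ i → y' j = y j

variable {i : Fin n} {d : ℕ} {x x' : Fin n → α} {y y' : Fin n → β}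

theorem agreeUpTo_self : AgreeUpTo i d x y x y := ⟨fun _ _ => rfl, fun _ _ => rfl⟩

theorem agreeBefore_self : AgreeBefore i d x y x y := ⟨fun _ _ => rfl, fun _ _ => rfl⟩

theorem AgreeUpTo.agreeBefore (h : AgreeUpTo i d x y x' y') : AgreeBefore i d x y x' y' :=
  ⟨fun j hj => h.1 j hj.le, h.2⟩

theorem AgreeUpTo.eq (h : AgreeUpTo i d x y x' y') :
    AgreeUpTo i d x' y' = AgreeUpTo i d x y := by
  ext u v
  exact ⟨fun ⟨hx, hy⟩ => ⟨fun j hj => (hx j hj).trans (h.1 j hj),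
      fun j hj => (hy j hj).trans (h.2 j hj)⟩,
    fun ⟨hx, hy⟩ => ⟨fun j hj => (hx j hj).trans (h.1 j hj).symm,
      fun j hj => (hy j hj).trans (h.2 j hj).symm⟩⟩

theorem AgreeBefore.eq (h : AgreeBefore i d x y x' y') :
    AgreeBefore i d x' y' = AgreeBefore i d x y := by
  ext u v
  exact ⟨fun ⟨hx, hy⟩ => ⟨fun j hj => (hx j hj).trans (h.1 j hj),
      fun j hj => (hy j hj).trans (h.2 j hj)⟩,
    fun ⟨hx, hy⟩ => ⟨fun j hj => (hx j hj).trans (h.1 j hj).symm,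
      fun j hj => (hy j hj).trans (h.2 j hj).symm⟩⟩

theorem AgreeBefore.symm (h : AgreeBefore i d x y x' y') : AgreeBefore i d x' y' x y :=
  h.eq ▸ agreeBefore_self

theorem agreeBefore_update (a : α) :
    AgreeBefore i d (Function.update x i a) y = AgreeBefore i d x y :=
  AgreeBefore.eq ⟨fun _ hj => Function.update_of_ne hj.ne _ _, fun _ _ => rfl⟩

theorem agreeUpTo_update_iff {a : α} :
    AgreeUpTo i d (Function.update x i a) y x' y' ↔ AgreeBefore i d x y x' y' ∧ x' i = a := by
  constructor
  · rintro ⟨hx, hy⟩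
    refine ⟨⟨fun j hj => ?_, hy⟩, by simpa using hx i le_rfl⟩
    simpa [Function.update_of_ne hj.ne] using hx j hj.le
  · rintro ⟨⟨hx, hy⟩, rfl⟩
    refine ⟨fun j hj => ?_, hy⟩
    by_cases hji : j = i
    · simp [hji]
    · simpa [Function.update_of_ne hji] using hx j (lt_of_le_of_ne hj hji)

end Events

section Probability

variable (p : (Fin n → α) → (Fin n → β) → ℝ)

theorem pr_nonneg (hp0 : ∀ x y, 0 ≤ p x y) (E : (Fin n → α) → (Fin n → β) → Prop) :
    0 ≤ pr p E :=
  sum_nonneg fun x _ => sum_nonneg fun y _ => ite_nonneg (hp0 x y) le_rfl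

theorem pr_pos_of_mem {E : (Fin n → α) → (Fin n → β) → Prop} (hp0 : ∀ x y, 0 ≤ p x y)
    {x : Fin n → α} {y : Fin n → β} (hE : E x y) (hxy : 0 < p x y) : 0 < pr p E := by
  have hterm : ∀ x' y', 0 ≤ if E x' y' then p x' y' else 0 := fun x' y' =>
    ite_nonneg (hp0 x' y') le_rfl
  refine hxy.trans_le ?_
  calc p x y = if E x y then p x y else 0 := (if_pos hE).symm
    _ ≤ ∑ y', if E x y' then p x y' else 0 :=
      single_le_sum (fun y' _ => hterm x y') (mem_univ y)
    _ ≤ pr p E := single_le_sum (fun x' _ => sum_nonneg fun y' _ => hterm x' y') (mem_univ x)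

theorem sum_ite_mul_eq_pr_mul {E : (Fin n → α) → (Fin n → β) → Prop}
    {f : (Fin n → α) → (Fin n → β) → ℝ} {c : ℝ} (hf : ∀ x y, E x y → f x y = c) :
    ∑ x, ∑ y, (if E x y then p x y * f x y else 0) = pr p E * c := by
  simp only [pr, sum_mul]
  refine sum_congr rfl fun x _ => sum_congr rfl fun y _ => ?_
  split_ifs with h
  · simp [hf x y h]
  · simp

theorem sum_mul_pr_eq_of_symm {R : (Fin n → α) → (Fin n → β) → (Fin n → α) → (Fin n → β) → Prop}
    (hR : ∀ x y x' y', R x y x' y' → R x' y' x y) (f : (Fin n → α) → (Fin n → β) → ℝ) :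
    ∑ x, ∑ y, p x y * f x y * pr p (R x y) =
      ∑ x, ∑ y, p x y * ∑ x', ∑ y', if R x y x' y' then p x' y' * f x' y' else 0 := by
  have hswap : ∀ F : (Fin n → α) → (Fin n → β) → (Fin n → α) → (Fin n → β) → ℝ,
      ∑ x, ∑ y, ∑ x', ∑ y', F x y x' y' = ∑ x', ∑ y', ∑ x, ∑ y, F x y x' y' := fun F =>
    calc _ = ∑ x, ∑ x', ∑ y, ∑ y', F x y x' y' := sum_congr rfl fun _ _ => sum_comm
      _ = ∑ x', ∑ x, ∑ y', ∑ y, F x y x' y' :=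
        sum_comm.trans (sum_congr rfl fun _ _ => sum_congr rfl fun _ _ => sum_comm)
      _ = _ := sum_congr rfl fun _ _ => sum_comm
  simp only [pr, mul_sum, mul_ite, mul_zero]
  rw [hswap]
  refine sum_congr rfl fun x _ => sum_congr rfl fun y _ => sum_congr rfl fun x' _ =>
    sum_congr rfl fun y' _ => ?_
  by_cases h : R x y x' y'
  · rw [if_pos h, if_pos (hR _ _ _ _ h)]
    ring
  · rw [if_neg h, if_neg (mt (hR _ _ _ _) h)]

theorem sum_mul_congr_of_pos (hp0 : ∀ x y, 0 ≤ p x y) {f g : (Fin n → α) → (Fin n → β) → ℝ}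
    (h : ∀ x y, 0 < p x y → f x y = g x y) :
    ∑ x, ∑ y, p x y * f x y = ∑ x, ∑ y, p x y * g x y := by
  refine sum_congr rfl fun x _ => sum_congr rfl fun y _ => ?_
  rcases (hp0 x y).eq_or_lt with h0 | h0
  · simp [← h0]
  · rw [h x y h0]

theorem sum_sum_sum_mul_comm (f : Fin n → (Fin n → α) → (Fin n → β) → ℝ) :
    ∑ i, ∑ x, ∑ y, p x y * f i x y = ∑ x, ∑ y, p x y * ∑ i, f i x y := by
  simp only [mul_sum]
  rw [sum_comm]
  exact sum_congr rfl fun _ _ => sum_comm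

end Probability

section Conditional

variable (p : (Fin n → α) → (Fin n → β) → ℝ) (d : ℕ) (i : Fin n)

theorem condX_eq_div (x : Fin n → α) (y : Fin n → β) :
    condX p d i x y = pr p (AgreeUpTo i d x y) / pr p (AgreeBefore i d x y) := by
  unfold condX
  congr 2
  ext x' y'
  refine ⟨fun ⟨hlt, hi, hy⟩ => ⟨fun j hj => ?_, hy⟩,
    fun ⟨hle, hy⟩ => ⟨fun j hj => hle j hj.le, hle i le_rfl, hy⟩⟩
  rcases hj.lt_or_eq with hj | rfl
  · exact hlt j hj
  · exact hi

theorem condX_nonneg (hp0 : ∀ x y, 0 ≤ p x y) (x : Fin n → α) (y : Fin n → β) :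
    0 ≤ condX p d i x y := by
  rw [condX_eq_div]
  exact div_nonneg (pr_nonneg p hp0 _) (pr_nonneg p hp0 _)

theorem condX_pos (hp0 : ∀ x y, 0 ≤ p x y) {x : Fin n → α} {y : Fin n → β} (hxy : 0 < p x y) :
    0 < condX p d i x y := by
  rw [condX_eq_div]
  exact div_pos (pr_pos_of_mem p hp0 agreeUpTo_self hxy) (pr_pos_of_mem p hp0 agreeBefore_self hxy)

theorem sum_agreeBefore_eq_sum_agreeUpTo_update (x : Fin n → α) (y : Fin n → β)
    (g : (Fin n → α) → (Fin n → β) → ℝ) :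
    ∑ x', ∑ y', (if AgreeBefore i d x y x' y' then g x' y' else 0) =
      ∑ a, ∑ x', ∑ y', if AgreeUpTo i d (Function.update x i a) y x' y' then g x' y' else 0 := by
  have hsplit : ∀ x' y', (if AgreeBefore i d x y x' y' then g x' y' else 0) =
      ∑ a, if AgreeUpTo i d (Function.update x i a) y x' y' then g x' y' else 0 := by
    intro x' y'
    simp only [agreeUpTo_update_iff, ite_and]
    by_cases h : AgreeBefore i d x y x' y' <;> simp [h]
  simp only [hsplit]
  exact (sum_congr rfl fun _ _ => sum_comm).trans sum_comm

theorem sum_pr_agreeUpTo_update (x : Fin n → α) (y : Fin n → β) :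
    ∑ a, pr p (AgreeUpTo i d (Function.update x i a) y) = pr p (AgreeBefore i d x y) :=
  (sum_agreeBefore_eq_sum_agreeUpTo_update d i x y p).symm

end Conditional

section Gibbs

theorem sum_mul_logb_le_of_sum_mul_div_le_one {ι : Type*} [Fintype ι] {w b q : ι → ℝ}
    (hw0 : ∀ k, 0 ≤ w k) (hw1 : ∑ k, w k = 1) (hb : ∀ k, 0 < w k → 0 < b k)
    (hq : ∀ k, 0 < w k → 0 < q k) (hbq : ∑ k, w k * (b k / q k) ≤ 1) :
    ∑ k, w k * Real.logb 2 (b k) ≤ ∑ k, w k * Real.logb 2 (q k) := by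
  have hlog2 : 0 < Real.log 2 := Real.log_pos one_lt_two
  have hterm : ∀ k, w k * Real.logb 2 (b k) - w k * Real.logb 2 (q k) ≤
      (w k * (b k / q k) - w k) / Real.log 2 := by
    intro k
    rcases (hw0 k).eq_or_lt with h0 | h0
    · simp [← h0]
    rw [← mul_sub, ← Real.logb_div (hb k h0).ne' (hq k h0).ne', Real.logb, ← mul_sub_one,
      mul_div_assoc]
    gcongr
    exact Real.log_le_sub_one_of_pos (div_pos (hb k h0) (hq k h0))
  have hsum := sum_le_sum fun k (_ : k ∈ univ) => hterm k
  rw [sum_sub_distrib, ← sum_div, sum_sub_distrib, hw1] at hsum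
  have : (∑ k, w k * (b k / q k) - 1) / Real.log 2 ≤ 0 :=
    div_nonpos_of_nonpos_of_nonneg (by linarith) hlog2.le
  linarith

end Gibbs

section Step

variable {p : (Fin n → α) → (Fin n → β) → ℝ} {d : ℕ} {i : Fin n}
  {b : (Fin n → α) → (Fin n → β) → ℝ}

theorem sum_mul_div_condX_le_one (hp : IsPmf p) (hb0 : ∀ x y, 0 ≤ b x y)
    (hbc : ∀ x y x' y', AgreeUpTo i d x y x' y' → b x' y' = b x y)
    (hb1 : ∀ x y, ∑ a, b (Function.update x i a) y = 1) :
    ∑ x, ∑ y, p x y * (b x y / condX p d i x y) ≤ 1 := by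
  -- Within an `AgreeBefore` cell the `AgreeUpTo` cells are indexed by the current horse `a`, and
  -- `b` is constant on each of them, so the cell contributes at most `∑ a, b = 1`.
  have hinner : ∀ x y, ∑ x', ∑ y', (if AgreeBefore i d x y x' y' then
      p x' y' * (b x' y' / pr p (AgreeUpTo i d x' y')) else 0) ≤ 1 := by
    intro x y
    rw [sum_agreeBefore_eq_sum_agreeUpTo_update, ← hb1 x y]
    refine sum_le_sum fun a _ => ?_
    rw [sum_ite_mul_eq_pr_mul p fun x' y' h => by rw [hbc _ _ _ _ h, h.eq]]
    rcases eq_or_ne (pr p (AgreeUpTo i d (Function.update x i a) y)) 0 with h | h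
    · simp [h, hb0]
    · rw [mul_div_cancel₀ _ h]
  calc ∑ x, ∑ y, p x y * (b x y / condX p d i x y)
      = ∑ x, ∑ y, p x y * (b x y / pr p (AgreeUpTo i d x y)) * pr p (AgreeBefore i d x y) := by
        simp only [condX_eq_div, div_div_eq_mul_div, mul_div_right_comm, mul_assoc]
    _ = ∑ x, ∑ y, p x y * ∑ x', ∑ y', (if AgreeBefore i d x y x' y' then
          p x' y' * (b x' y' / pr p (AgreeUpTo i d x' y')) else 0) :=
        sum_mul_pr_eq_of_symm p (fun _ _ _ _ h => h.symm) _
    _ ≤ ∑ x, ∑ y, p x y * 1 := by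
        gcongr with x _ y _
        · exact hp.1 x y
        · exact hinner x y
    _ = 1 := by simp [hp.2]

theorem sum_mul_logb_le_sum_mul_logb_condX (hp : IsPmf p) (hb0 : ∀ x y, 0 ≤ b x y)
    (hbc : ∀ x y x' y', AgreeUpTo i d x y x' y' → b x' y' = b x y)
    (hb1 : ∀ x y, ∑ a, b (Function.update x i a) y = 1) (hbp : ∀ x y, 0 < p x y → 0 < b x y) :
    ∑ x, ∑ y, p x y * Real.logb 2 (b x y) ≤ ∑ x, ∑ y, p x y * Real.logb 2 (condX p d i x y) := by
  have hw1 : ∑ z : (Fin n → α) × (Fin n → β), p z.1 z.2 = 1 := by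
    rw [Fintype.sum_prod_type']; exact hp.2
  have hbq := sum_mul_div_condX_le_one hp hb0 hbc hb1
  rw [← Fintype.sum_prod_type'] at hbq
  simpa only [Fintype.sum_prod_type] using sum_mul_logb_le_of_sum_mul_div_le_one
    (fun z : (Fin n → α) × (Fin n → β) => hp.1 z.1 z.2) hw1 (fun z => hbp z.1 z.2)
    (fun _ => condX_pos p d i hp.1) hbq

end Step

theorem Finset.pos_of_prod_pos {ι : Type*} {s : Finset ι} {f : ι → ℝ} (h0 : ∀ i ∈ s, 0 ≤ f i)
    (h : 0 < ∏ i ∈ s, f i) {i : ι} (hi : i ∈ s) : 0 < f i :=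
  (h0 i hi).lt_of_ne' (prod_ne_zero_iff.mp h.ne' i hi)

section Growth

variable {p : (Fin n → α) → (Fin n → β) → ℝ} {o : Fin n → (Fin n → α) → ℝ}
  {b : Fin n → (Fin n → α) → (Fin n → β) → ℝ}

theorem growthW_eq (hp0 : ∀ x y, 0 ≤ p x y) (ho : ∀ i x, 0 < o i x)
    (hbp : ∀ x y, 0 < p x y → 0 < ∏ i, b i x y) :
    growthW p o b = Elogo p o + ∑ i, ∑ x, ∑ y, p x y * Real.logb 2 (b i x y) := by
  rw [sum_sum_sum_mul_comm, Elogo, ← sum_add_distrib]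
  simp only [← sum_add_distrib, ← mul_add]
  refine sum_mul_congr_of_pos p hp0 fun x y hxy => ?_
  have hb : ∀ i ∈ univ, b i x y ≠ 0 := prod_ne_zero_iff.mp (hbp x y hxy).ne'
  rw [prod_mul_distrib, Real.logb_mul (hbp x y hxy).ne' (prod_pos fun i _ => ho i x).ne',
    Real.logb_prod _ _ hb, add_comm]

theorem growthW_le (hp : IsPmf p) (ho : ∀ i x, 0 < o i x) {d : ℕ} (hb : IsCausalBet b)
    (hbc : ∀ i x y x' y', AgreeUpTo i d x y x' y' → b i x' y' = b i x y)
    (hbp : ∀ x y, 0 < p x y → 0 < ∏ i, b i x y) :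
    growthW p o b ≤ Elogo p o - HccX p d := by
  rw [growthW_eq hp.1 ho hbp, HccX, sub_eq_add_neg, ← sum_neg_distrib]
  simp only [HcondX, neg_neg]
  gcongr Elogo p o + ∑ i, ?_ with i
  exact sum_mul_logb_le_sum_mul_logb_condX hp (hb.1 i) (hbc i) (hb.2.2 i)
    fun x y hxy => pos_of_prod_pos (fun i _ => hb.1 i x y) (hbp x y hxy) (mem_univ i)

end Growth

section ChainRule

variable {p : (Fin n → α) → (Fin n → β) → ℝ}

theorem condX_n_eq (i : Fin n) (x : Fin n → α) (y : Fin n → β) :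
    condX p n i x y = pr p (fun x' _ => ∀ j : Fin n, (j : ℕ) < i + 1 → x' j = x j) /
      pr p (fun x' _ => ∀ j : Fin n, (j : ℕ) < i → x' j = x j) := by
  have hy : ∀ j : Fin n, ¬ (j : ℕ) + n ≤ i := fun j => by omega
  unfold condX
  congr 2 <;> ext x' y'
  · simp [hy, le_iff_lt_or_eq, or_imp, forall_and, Fin.val_inj]
  · simp [hy]

theorem sum_logb_condX_n (hp : IsPmf p) {x : Fin n → α} {y : Fin n → β} (hxy : 0 < p x y) :
    ∑ i, Real.logb 2 (condX p n i x y) = Real.logb 2 (pX p x) := by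
  set g : ℕ → ℝ := fun k => pr p (fun x' _ => ∀ j : Fin n, (j : ℕ) < k → x' j = x j)
  have hg : ∀ k, 0 < g k := fun k => pr_pos_of_mem p hp.1 (fun _ _ => rfl) hxy
  have hg0 : g 0 = 1 := by simp [g, pr, hp.2]
  have hgn : g n = pX p x := by
    have hev : ∀ x' : Fin n → α, (∀ j : Fin n, (j : ℕ) < n → x' j = x j) ↔ x' = x := fun x' => by
      simp [funext_iff]
    simp only [g, pr, hev]
    rw [Fintype.sum_eq_single x fun x' hx' => by simp [hx']]
    simp [pX]
  calc ∑ i, Real.logb 2 (condX p n i x y)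
      = ∑ i : Fin n, (Real.logb 2 (g (i + 1)) - Real.logb 2 (g i)) :=
        sum_congr rfl fun i _ => by rw [condX_n_eq, Real.logb_div (hg _).ne' (hg _).ne']
    _ = ∑ k ∈ range n, (Real.logb 2 (g (k + 1)) - Real.logb 2 (g k)) :=
        Fin.sum_univ_eq_sum_range (fun k => Real.logb 2 (g (k + 1)) - Real.logb 2 (g k)) n
    _ = Real.logb 2 (pX p x) := by
        rw [sum_range_sub (fun k => Real.logb 2 (g k)), hg0, hgn, Real.logb_one, sub_zero]

theorem HccX_n_eq_HX (hp : IsPmf p) : HccX p n = HX p := by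
  simp only [HccX, HcondX, HX, sum_neg_distrib]
  rw [sum_sum_sum_mul_comm]
  exact congrArg _ (sum_mul_congr_of_pos p hp.1 fun x y hxy => sum_logb_condX_n hp hxy)

end ChainRule

section OptimalBet

variable {p : (Fin n → α) → (Fin n → β) → ℝ}

theorem IsPmf.nonempty (hp : IsPmf p) (i : Fin n) : Nonempty α := by
  obtain ⟨x, -, -⟩ := exists_ne_zero_of_sum_ne_zero (hp.2.symm ▸ one_ne_zero :
    ∑ x, ∑ y, p x y ≠ 0)
  exact ⟨x i⟩

variable (p) in
-- On histories of probability zero `condX` is the junk value `0 / 0 = 0`; bet uniformly there.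
def condXBet (d : ℕ) : Fin n → (Fin n → α) → (Fin n → β) → ℝ :=
  fun i x y => if 0 < pr p (AgreeBefore i d x y) then condX p d i x y else (Fintype.card α : ℝ)⁻¹

variable {d : ℕ} {i : Fin n} {x x' : Fin n → α} {y y' : Fin n → β}

theorem condXBet_eq_of_agreeUpTo (h : AgreeUpTo i d x y x' y') :
    condXBet p d i x' y' = condXBet p d i x y := by
  simp only [condXBet, condX_eq_div, h.eq, h.agreeBefore.eq]

theorem condXBet_of_pos (hp0 : ∀ x y, 0 ≤ p x y) (hxy : 0 < p x y) :
    condXBet p d i x y = condX p d i x y :=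
  if_pos (pr_pos_of_mem p hp0 agreeBefore_self hxy)

theorem isCausalBet_condXBet (hp : IsPmf p) (d : ℕ) : IsCausalBet (condXBet p d) := by
  refine ⟨fun i x y => ?_, fun i x x' y y' hx hy => ?_, fun i x y => ?_⟩
  · unfold condXBet
    split_ifs
    · exact condX_nonneg p d i hp.1 x y
    · positivity
  · exact condXBet_eq_of_agreeUpTo ⟨hx, fun j hj => hy j ((Nat.le_add_right _ _).trans hj)⟩
  · have := hp.nonempty i
    simp only [condXBet, agreeBefore_update]
    split_ifs with h
    · simp only [condX_eq_div, agreeBefore_update]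
      rw [← sum_div, sum_pr_agreeUpTo_update, div_self h.ne']
    · simp

theorem condXBet_prod_pos (hp0 : ∀ x y, 0 ≤ p x y) (d : ℕ) (x : Fin n → α) (y : Fin n → β)
    (hxy : 0 < p x y) : 0 < ∏ i, condXBet p d i x y :=
  prod_pos fun _ _ => (condXBet_of_pos hp0 hxy).symm ▸ condX_pos p d _ hp0 hxy

theorem condXBet_n_eq (i : Fin n) (x : Fin n → α) (y y' : Fin n → β) :
    condXBet p n i x y = condXBet p n i x y' :=
  (condXBet_eq_of_agreeUpTo ⟨fun _ _ => rfl, fun j hj => absurd hj (by omega)⟩).symm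

theorem growthW_condXBet (hp : IsPmf p) {o : Fin n → (Fin n → α) → ℝ} (ho : ∀ i x, 0 < o i x)
    (d : ℕ) : growthW p o (condXBet p d) = Elogo p o - HccX p d := by
  rw [growthW_eq hp.1 ho (condXBet_prod_pos hp.1 d), HccX, sub_eq_add_neg, ← sum_neg_distrib]
  simp only [HcondX, neg_neg]
  exact congrArg _ (sum_congr rfl fun i _ =>
    sum_mul_congr_of_pos p hp.1 fun x y hxy => by rw [condXBet_of_pos hp.1 hxy])

end OptimalBet

section Causality

omit [Fintype β]

variable {b : Fin n → (Fin n → α) → (Fin n → β) → ℝ} {d : ℕ} {i : Fin n}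
  {x x' : Fin n → α} {y y' : Fin n → β}

theorem IsCausalBet.eq_of_agreeUpTo_zero (hb : IsCausalBet b) (h : AgreeUpTo i 0 x y x' y') :
    b i x' y' = b i x y :=
  hb.2.1 i x' x y' y h.1 fun j hj => h.2 j hj

theorem IsCausalBet.eq_of_agreeUpTo_of_indep (hb : IsCausalBet b)
    (hy : ∀ i x y y', b i x y = b i x y') (h : AgreeUpTo i d x y x' y') : b i x' y' = b i x y :=
  (hb.2.1 i x' x y' y' h.1 fun _ _ => rfl).trans (hy i x y' y)

end Causality

end HorseRace

theorem increase_in_growth_rate_general {n : ℕ}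
    (p : (Fin n → α) → (Fin n → β) → ℝ) (hp : IsPmf p)
    (o : Fin n → (Fin n → α) → ℝ) (ho : ∀ i x, 0 < o i x) :
    sSup {w | ∃ b, IsCausalBet b ∧ (∀ x y, 0 < p x y → 0 < ∏ i, b i x y) ∧
        w = growthW p o b} -
      sSup {w | ∃ b, IsCausalBet b ∧ (∀ i x y y', b i x y = b i x y') ∧
        (∀ x y, 0 < p x y → 0 < ∏ i, b i x y) ∧ w = growthW p o b} =
    HX p - HccX p 0 := by
  have hside : IsGreatest {w | ∃ b, IsCausalBet b ∧ (∀ x y, 0 < p x y → 0 < ∏ i, b i x y) ∧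
      w = growthW p o b} (Elogo p o - HccX p 0) := by
    refine ⟨⟨condXBet p 0, isCausalBet_condXBet hp 0, condXBet_prod_pos hp.1 0,
      (growthW_condXBet hp ho 0).symm⟩, ?_⟩
    rintro _ ⟨b, hb, hbp, rfl⟩
    exact growthW_le hp ho hb (fun _ _ _ _ _ => hb.eq_of_agreeUpTo_zero) hbp
  have hnoside : IsGreatest {w | ∃ b, IsCausalBet b ∧ (∀ i x y y', b i x y = b i x y') ∧
      (∀ x y, 0 < p x y → 0 < ∏ i, b i x y) ∧ w = growthW p o b} (Elogo p o - HccX p n) := by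
    refine ⟨⟨condXBet p n, isCausalBet_condXBet hp n, condXBet_n_eq, condXBet_prod_pos hp.1 n,
      (growthW_condXBet hp ho n).symm⟩, ?_⟩
    rintro _ ⟨b, hb, hy, hbp, rfl⟩
    exact growthW_le hp ho hb (fun _ _ _ _ _ => hb.eq_of_agreeUpTo_of_indep hy) hbp
  rw [hside.csSup_eq, hnoside.csSup_eq, HccX_n_eq_HX hp]
  ring

/-- the increase in optimal growth due to causal side information in a
horse race equals the directed information:
`W*(X^n||Y^n) − W*(X^n) = I(Y^n → X^n) = H(X^n) − H(X^n||Y^n)`.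
Here `W*(X^n||Y^n)` is the supremum of the growth over causal strategies using the
side information, and `W*(X^n)` over strategies ignoring it. -/
theorem increase_in_growth_rate {n : ℕ}
    (p : (Fin n → α) → (Fin n → β) → ℝ) (hp : IsPmf p)
    (o : Fin n → (Fin n → α) → ℝ) (ho : ∀ i x, 0 < o i x)
    (hoc : ∀ i x x', (∀ j, j ≤ i → x j = x' j) → o i x = o i x') :
    sSup {w | ∃ b, IsCausalBet b ∧ (∀ x y, 0 < p x y → 0 < ∏ i, b i x y) ∧
        w = growthW p o b} -
      sSup {w | ∃ b, IsCausalBet b ∧ (∀ i x y y', b i x y = b i x y') ∧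
        (∀ x y, 0 < p x y → 0 < ∏ i, b i x y) ∧ w = growthW p o b} =
    HX p - HccX p 0 :=
  increase_in_growth_rate_general p hp o ho
end
end
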